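/- arXiv:2505.16618 — 2 statements merged into one kernel-verified Lean document; each statement's English description precedes it below -/
import Mathlib

section
/- The cross-Kerr unitary (−1)^{n̂₂ n̂₄} acting on two copies of the two-mode Fourier cat code implements a logical CZ gate: (−1)^{n̂₂ n̂₄}|ℓ₁,m₁⟩|ℓ₂,m₂⟩ = (−1)^{ℓ₁ℓ₂}|ℓ₁,m₁⟩|ℓ₂,m₂⟩. -/
lemma neg_one_pow_mod_two (a : ℕ) : ((-1 : ℂ)) ^ a = ((-1 : ℂ)) ^ (a % 2) := by
  conv_lhs => rw [← Nat.div_add_mod a 2, pow_add, pow_mul]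
  simp

/-- **The cross-Kerr unitary `(−1)^{n̂₂ n̂₄}` implements a logical `CZ` gate on two
copies of the two-mode Fourier cat code.**  Let `e n₁ n₂ n₃ n₄` be the joint Fock basis
of four bosonic modes and `K` the (continuous linear) cross-Kerr operator acting as
`K e = (−1)^{n₂ n₄} e` (functional calculus on the joint Fock basis).  If each code
state `|ℓ₁,m₁⟩|ℓ₂,m₂⟩` lies in the closed span of Fock states whose photon number in
mode 2 has parity `ℓ₁` and in mode 4 has parity `ℓ₂` (the parity of mode 2, resp. 4,
equals the logical index), then
`(−1)^{n̂₂ n̂₄}|ℓ₁,m₁⟩|ℓ₂,m₂⟩ = (−1)^{ℓ₁ℓ₂}|ℓ₁,m₁⟩|ℓ₂,m₂⟩`. -/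
theorem cross_kerr_implements_CZ
    {H4 : Type*} [NormedAddCommGroup H4] [NormedSpace ℂ H4]
    (e : ℕ → ℕ → ℕ → ℕ → H4)
    (K : H4 →L[ℂ] H4)
    (hK : ∀ n1 n2 n3 n4 : ℕ,
      K (e n1 n2 n3 n4) = ((-1 : ℂ)) ^ (n2 * n4) • e n1 n2 n3 n4)
    (c : Fin 2 → Fin 2 → Fin 2 → Fin 2 → H4)
    (hc : ∀ ℓ₁ m₁ ℓ₂ m₂ : Fin 2,
      c ℓ₁ m₁ ℓ₂ m₂ ∈ closure
        ((Submodule.span ℂ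
          {v : H4 | ∃ n1 n2 n3 n4 : ℕ,
            n2 % 2 = (ℓ₁ : ℕ) ∧ n4 % 2 = (ℓ₂ : ℕ) ∧ v = e n1 n2 n3 n4}) : Set H4)) :
    ∀ ℓ₁ m₁ ℓ₂ m₂ : Fin 2,
      K (c ℓ₁ m₁ ℓ₂ m₂) = ((-1 : ℂ)) ^ ((ℓ₁ : ℕ) * (ℓ₂ : ℕ)) • c ℓ₁ m₁ ℓ₂ m₂ := by
  intro ℓ₁ m₁ ℓ₂ m₂
  set T : H4 →L[ℂ] H4 :=
    K - ((-1 : ℂ)) ^ ((ℓ₁ : ℕ) * (ℓ₂ : ℕ)) • (ContinuousLinearMap.id ℂ H4) with hT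
  have key : T (c ℓ₁ m₁ ℓ₂ m₂) = 0 := by
    have hsub : (Submodule.span ℂ
        {v : H4 | ∃ n1 n2 n3 n4 : ℕ,
          n2 % 2 = (ℓ₁ : ℕ) ∧ n4 % 2 = (ℓ₂ : ℕ) ∧ v = e n1 n2 n3 n4} : Set H4)
        ⊆ (LinearMap.ker (T : H4 →ₗ[ℂ] H4) : Set H4) := by
      apply Submodule.span_le.mpr
      intro v hv
      obtain ⟨n1, n2, n3, n4, h2, h4, rfl⟩ := hv
      simp only [SetLike.mem_coe, LinearMap.mem_ker, ContinuousLinearMap.coe_coe, hT,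
        ContinuousLinearMap.sub_apply, ContinuousLinearMap.smul_apply,
        ContinuousLinearMap.id_apply, hK, sub_eq_zero]
      congr 1
      rw [neg_one_pow_mod_two (n2 * n4), neg_one_pow_mod_two ((ℓ₁ : ℕ) * (ℓ₂ : ℕ)),
        Nat.mul_mod, h2, h4]
    have hclosed : IsClosed ((LinearMap.ker (T : H4 →ₗ[ℂ] H4) : Set H4)) := by
      have : (LinearMap.ker (T : H4 →ₗ[ℂ] H4) : Set H4) = T ⁻¹' {0} := by
        ext x; simp
      rw [this]
      exact IsClosed.preimage T.continuous isClosed_singleton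
    have := (hclosed.closure_subset_iff.mpr hsub) (hc ℓ₁ m₁ ℓ₂ m₂)
    simpa using this
  have := key
  simp only [hT, ContinuousLinearMap.sub_apply, ContinuousLinearMap.smul_apply,
    ContinuousLinearMap.id_apply, sub_eq_zero] at this
  exact this
end

section
/- The four code basis states of the two-mode Fourier cat code with α = √(π/2) all lie in the odd total-parity sector and in the kernel of the operators L₁ = â₁⁴ − α⁴, L₂ = â₂⁴ − α⁴, L₁₂ = â₁²â₂² + α⁴, and L₀ = â₁² + â₂². -/
/-- The normalized two-mode product cat state `|k_β⟩ ⊗ |l_γ⟩`, expressed in terms of the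
two-mode coherent states `coh2 (β, γ) = |β⟩⊗|γ⟩`. -/
noncomputable def catState2 {H2 : Type*} [NormedAddCommGroup H2] [InnerProductSpace ℂ H2]
    (coh2 : ℂ × ℂ → H2) (k l : ℕ) (β γ : ℂ) : H2 :=
  (‖coh2 (β, γ) + ((-1 : ℂ)) ^ l • coh2 (β, -γ) + ((-1 : ℂ)) ^ k • coh2 (-β, γ)
      + ((-1 : ℂ)) ^ (k + l) • coh2 (-β, -γ)‖⁻¹ : ℝ) •
    (coh2 (β, γ) + ((-1 : ℂ)) ^ l • coh2 (β, -γ) + ((-1 : ℂ)) ^ k • coh2 (-β, γ)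
      + ((-1 : ℂ)) ^ (k + l) • coh2 (-β, -γ))

/-- The code basis states of the two-mode Fourier cat code:
`|0,0⟩ = |1_α⟩|0_{iα}⟩`, `|0,1⟩ = |1_{iα}⟩|0_α⟩`, `|1,0⟩ = |0_{iα}⟩|1_α⟩`,
`|1,1⟩ = |0_α⟩|1_{iα}⟩`. -/
noncomputable def fourierCodeState {H2 : Type*} [NormedAddCommGroup H2]
    [InnerProductSpace ℂ H2] (coh2 : ℂ × ℂ → H2) (α : ℂ) (ℓ m : Fin 2) : H2 :=
  catState2 coh2 (1 - (ℓ : ℕ)) (ℓ : ℕ)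
    (if ((ℓ : ℕ) + (m : ℕ)) % 2 = 0 then α else Complex.I * α)
    (if ((ℓ : ℕ) + (m : ℕ)) % 2 = 0 then Complex.I * α else α)

section
variable {H2 : Type*} [NormedAddCommGroup H2] [InnerProductSpace ℂ H2]

lemma fourier_master (coh2 : ℂ × ℂ → H2) (a1 a2 P : H2 →ₗ[ℂ] H2)
    (ha1 : ∀ β γ : ℂ, a1 (coh2 (β, γ)) = β • coh2 (β, γ))
    (ha2 : ∀ β γ : ℂ, a2 (coh2 (β, γ)) = γ • coh2 (β, γ))
    (hP : ∀ β γ : ℂ, P (coh2 (β, γ)) = coh2 (-β, -γ))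
    (α c d s2 s3 : ℂ) (v w : H2)
    (hv : v = coh2 (c, d) + s2 • coh2 (c, -d) + s3 • coh2 (-c, d)
        + (-1 : ℂ) • coh2 (-c, -d))
    (hw : w = (‖v‖⁻¹ : ℝ) • v)
    (h23 : s3 = -s2)
    (hc4 : c ^ 4 = α ^ 4) (hd4 : d ^ 4 = α ^ 4)
    (hcd : c ^ 2 * d ^ 2 = -α ^ 4) (h0 : c ^ 2 + d ^ 2 = 0) :
    a1 (a1 (a1 (a1 w))) = (α ^ 4) • w ∧
    a2 (a2 (a2 (a2 w))) = (α ^ 4) • w ∧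
    a1 (a1 (a2 (a2 w))) = (-(α ^ 4)) • w ∧
    a1 (a1 w) + a2 (a2 w) = 0 ∧
    P w = -w := by
  have H1 : a1 (a1 v) = (c ^ 2) • v := by
    simp only [hv, map_add, map_smul, ha1, smul_smul]
    module
  have H2 : a2 (a2 v) = (d ^ 2) • v := by
    simp only [hv, map_add, map_smul, ha2, smul_smul]
    module
  have H14 : a1 (a1 (a1 (a1 v))) = (α ^ 4) • v := by
    rw [H1, map_smul, map_smul, H1, smul_smul, ← pow_add]
    norm_num [hc4]
  have H24 : a2 (a2 (a2 (a2 v))) = (α ^ 4) • v := by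
    rw [H2, map_smul, map_smul, H2, smul_smul, ← pow_add]
    norm_num [hd4]
  have H12 : a1 (a1 (a2 (a2 v))) = (-(α ^ 4)) • v := by
    rw [H2, map_smul, map_smul, H1, smul_smul, mul_comm, hcd]
  have HPv : P v = -v := by
    simp only [hv, map_add, map_smul, hP, neg_neg, h23]
    module
  subst hw
  refine ⟨?_, ?_, ?_, ?_, ?_⟩
  · rw [LinearMap.map_smul_of_tower, LinearMap.map_smul_of_tower,
      LinearMap.map_smul_of_tower, LinearMap.map_smul_of_tower, H14, smul_comm]
  · rw [LinearMap.map_smul_of_tower, LinearMap.map_smul_of_tower,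
      LinearMap.map_smul_of_tower, LinearMap.map_smul_of_tower, H24, smul_comm]
  · rw [LinearMap.map_smul_of_tower, LinearMap.map_smul_of_tower,
      LinearMap.map_smul_of_tower, LinearMap.map_smul_of_tower, H12, smul_comm]
  · simp only [LinearMap.map_smul_of_tower, H1, H2, ← smul_add, ← add_smul, h0,
      zero_smul, smul_zero]
  · simp only [LinearMap.map_smul_of_tower, HPv, smul_neg]

end


/-- **Stabilization of the two-mode Fourier cat code.**  At `α = √(π/2)`, the four code
basis states lie in the odd total-photon-number-parity sector (the parity operator
`(−1)^{n̂₁+n̂₂}`, which maps `|β,γ⟩ ↦ |−β,−γ⟩`, acts as `−1`) and in the kernel of the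
Lindblad-type operators `L₁ = â₁⁴ − α⁴`, `L₂ = â₂⁴ − α⁴`, `L₁₂ = â₁²â₂² + α⁴` and
`L₀ = â₁² + â₂²`. -/
theorem fourier_cat_code_stabilizers
    {H2 : Type*} [NormedAddCommGroup H2] [InnerProductSpace ℂ H2]
    (coh2 : ℂ × ℂ → H2)
    (a1 a2 P : H2 →ₗ[ℂ] H2)
    (ha1 : ∀ β γ : ℂ, a1 (coh2 (β, γ)) = β • coh2 (β, γ))
    (ha2 : ∀ β γ : ℂ, a2 (coh2 (β, γ)) = γ • coh2 (β, γ))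
    (hP : ∀ β γ : ℂ, P (coh2 (β, γ)) = coh2 (-β, -γ)) :
    let α : ℂ := (Real.sqrt (Real.pi / 2) : ℂ)
    ∀ ℓ m : Fin 2,
      a1 (a1 (a1 (a1 (fourierCodeState coh2 α ℓ m)))) =
          (α ^ 4) • fourierCodeState coh2 α ℓ m ∧
      a2 (a2 (a2 (a2 (fourierCodeState coh2 α ℓ m)))) =
          (α ^ 4) • fourierCodeState coh2 α ℓ m ∧
      a1 (a1 (a2 (a2 (fourierCodeState coh2 α ℓ m)))) =
          (-(α ^ 4)) • fourierCodeState coh2 α ℓ m ∧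
      a1 (a1 (fourierCodeState coh2 α ℓ m)) + a2 (a2 (fourierCodeState coh2 α ℓ m)) = 0 ∧
      P (fourierCodeState coh2 α ℓ m) = -fourierCodeState coh2 α ℓ m := by
  intro α
  have hI2 : (Complex.I * α) ^ 2 = -α ^ 2 := by
    rw [mul_pow, Complex.I_sq]; ring
  have hI4 : (Complex.I * α) ^ 4 = α ^ 4 := by
    rw [show (Complex.I * α) ^ 4 = ((Complex.I * α) ^ 2) ^ 2 from by ring, hI2]; ring
  have hcd1 : α ^ 2 * (Complex.I * α) ^ 2 = -α ^ 4 := by rw [hI2]; ring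
  have hcd2 : (Complex.I * α) ^ 2 * α ^ 2 = -α ^ 4 := by rw [hI2]; ring
  have h01 : α ^ 2 + (Complex.I * α) ^ 2 = 0 := by rw [hI2]; ring
  have h02 : (Complex.I * α) ^ 2 + α ^ 2 = 0 := by rw [hI2]; ring
  intro ℓ m
  fin_cases ℓ <;> fin_cases m
  · exact fourier_master coh2 a1 a2 P ha1 ha2 hP α α (Complex.I * α) 1 (-1) _ _ rfl
      (by simp [fourierCodeState, catState2]) (by norm_num) rfl hI4 hcd1 h01
  · exact fourier_master coh2 a1 a2 P ha1 ha2 hP α (Complex.I * α) α 1 (-1) _ _ rfl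
      (by simp [fourierCodeState, catState2]) (by norm_num) hI4 rfl hcd2 h02
  · exact fourier_master coh2 a1 a2 P ha1 ha2 hP α (Complex.I * α) α (-1) 1 _ _ rfl
      (by simp [fourierCodeState, catState2]) (by norm_num) hI4 rfl hcd2 h02
  · exact fourier_master coh2 a1 a2 P ha1 ha2 hP α α (Complex.I * α) (-1) 1 _ _ rfl
      (by simp [fourierCodeState, catState2]) (by norm_num) rfl hI4 hcd1 h01
end
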